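/- arXiv:1209.0835 — 3 statements merged into one kernel-verified Lean document; each statement's English description precedes it below -/
import Mathlib

section
/- Let T be a nonempty finite set, let I ∈ {0,1}, and let F : T → ℝ satisfy 0 ≤ F(t) ≤ 2^I for every t ∈ T. Let ε > 0 and ν ≥ 1 be real numbers, and let K = ⌈ln(2ν)/(2ε²)⌉. Let t₁, …, t_K be independent random variables, each uniformly distributed on T, and set C = 2^{−I}·E[F(t₁)] and C̃ = (1/(2^I·K))·∑_{i=1}^{K} F(t_i). Then P(|C̃ − C| ≤ ε) ≥ 1 − 1/ν. -/
/-!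
Normalise the samples to `Y i = F (t i) / 2 ^ I ∈ [0, 1]`. They are independent with common
mean `C`, and `C̃` is their empirical mean. By Hoeffding's lemma each centred `Y i` is
sub-Gaussian with parameter `1/4`, so the two-sided Hoeffding inequality bounds
`P(|C̃ - C| > ε)` by `2 exp (-2 K ε²)`, which is at most `1/ν` as soon as
`K ≥ ln (2ν) / (2ε²)`.
-/

open MeasureTheory ProbabilityTheory Real Finset

namespace ProbabilityTheory

variable {Ω ι : Type*} {mΩ : MeasurableSpace Ω} {μ : Measure Ω}

lemma one_sub_measureReal_le_of_compl_subset [IsProbabilityMeasure μ] {s t : Set Ω}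
    (h : sᶜ ⊆ t) : 1 - μ.real t ≤ μ.real s := by
  have h_cover : μ.real (s ∪ sᶜ) ≤ μ.real s + μ.real sᶜ := measureReal_union_le _ _
  rw [Set.union_compl_self, probReal_univ] at h_cover
  linarith [measureReal_mono (μ := μ) h]

lemma HasSubgaussianMGF.measure_abs_sum_ge_le_of_iIndepFun [IsFiniteMeasure μ]
    {X : ι → Ω → ℝ} (h_indep : iIndepFun X μ) {c : ι → NNReal} {s : Finset ι}
    (h_subG : ∀ i ∈ s, HasSubgaussianMGF (X i) (c i) μ) {ε : ℝ} (hε : 0 ≤ ε) :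
    μ.real {ω | ε ≤ |∑ i ∈ s, X i ω|} ≤ 2 * exp (-ε ^ 2 / (2 * ∑ i ∈ s, c i)) := by
  have h_neg_indep : iIndepFun (fun i => -X i) μ :=
    h_indep.comp (fun _ x => -x) fun _ => measurable_neg
  have h_split : {ω | ε ≤ |∑ i ∈ s, X i ω|}
      ⊆ {ω | ε ≤ ∑ i ∈ s, X i ω} ∪ {ω | ε ≤ ∑ i ∈ s, (-X i) ω} := by
    intro ω hω
    simpa [sum_neg_distrib, le_abs] using hω
  calc μ.real {ω | ε ≤ |∑ i ∈ s, X i ω|}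
      ≤ μ.real {ω | ε ≤ ∑ i ∈ s, X i ω} + μ.real {ω | ε ≤ ∑ i ∈ s, (-X i) ω} :=
        (measureReal_mono h_split).trans (measureReal_union_le _ _)
    _ ≤ exp (-ε ^ 2 / (2 * ∑ i ∈ s, c i)) + exp (-ε ^ 2 / (2 * ∑ i ∈ s, c i)) :=
        add_le_add (measure_sum_ge_le_of_iIndepFun h_indep h_subG hε)
          (measure_sum_ge_le_of_iIndepFun h_neg_indep (fun i hi => (h_subG i hi).neg) hε)
    _ = 2 * exp (-ε ^ 2 / (2 * ∑ i ∈ s, c i)) := by ring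

variable [IsProbabilityMeasure μ] {X : ι → Ω → ℝ} {a b : ℝ}

lemma measureReal_abs_sum_sub_integral_ge_le (h_indep : iIndepFun X μ)
    (hm : ∀ i, AEMeasurable (X i) μ) (hab : ∀ i, ∀ᵐ ω ∂μ, X i ω ∈ Set.Icc a b)
    (s : Finset ι) {ε : ℝ} (hε : 0 ≤ ε) :
    μ.real {ω | ε ≤ |∑ i ∈ s, (X i ω - μ[X i])|}
      ≤ 2 * exp (-2 * ε ^ 2 / (#s * (b - a) ^ 2)) := by
  have h_indep' : iIndepFun (fun i => (fun x => x - μ[X i]) ∘ X i) μ :=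
    h_indep.comp (fun i x => x - μ[X i]) fun _ => measurable_id.sub_const _
  have h := HasSubgaussianMGF.measure_abs_sum_ge_le_of_iIndepFun h_indep'
    (fun i _ => hasSubgaussianMGF_of_mem_Icc (hm i) (hab i)) (s := s) hε
  have h_var : 2 * ((∑ _i ∈ s, (‖b - a‖₊ / 2) ^ 2 : NNReal) : ℝ) = #s * (b - a) ^ 2 / 2 := by
    push_cast [sum_const, Real.norm_eq_abs, div_pow, sq_abs]
    ring
  refine h.trans_eq ?_
  rw [h_var, div_div_eq_mul_div]
  ring_nf

lemma one_sub_two_mul_exp_le_measureReal_abs_sum_div_card_sub_le (h_indep : iIndepFun X μ)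
    (hm : ∀ i, AEMeasurable (X i) μ) (hab : ∀ i, ∀ᵐ ω ∂μ, X i ω ∈ Set.Icc a b)
    {s : Finset ι} (hs : s.Nonempty) {m : ℝ} (h_mean : ∀ i ∈ s, μ[X i] = m)
    {ε : ℝ} (hε : 0 ≤ ε) :
    1 - 2 * exp (-2 * #s * ε ^ 2 / (b - a) ^ 2)
      ≤ μ.real {ω | |(∑ i ∈ s, X i ω) / #s - m| ≤ ε} := by
  have h_card : (0 : ℝ) < #s := Nat.cast_pos.2 hs.card_pos
  have h_tail : {ω | |(∑ i ∈ s, X i ω) / #s - m| ≤ ε}ᶜ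
      ⊆ {ω | #s * ε ≤ |∑ i ∈ s, (X i ω - μ[X i])|} := by
    intro ω hω
    have h_centered : ∑ i ∈ s, (X i ω - μ[X i]) = #s * ((∑ i ∈ s, X i ω) / #s - m) := by
      rw [sum_sub_distrib, sum_congr rfl h_mean, sum_const, nsmul_eq_mul]
      field_simp
    rw [Set.mem_compl_iff, Set.mem_ofPred_eq, not_le] at hω
    rw [Set.mem_ofPred_eq, h_centered, abs_mul, Nat.abs_cast]
    exact mul_le_mul_of_nonneg_left hω.le h_card.le
  have h_exponent : -2 * #s * ε ^ 2 / (b - a) ^ 2 = -2 * (#s * ε) ^ 2 / (#s * (b - a) ^ 2) := by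
    rw [mul_pow, show -2 * ((#s : ℝ) ^ 2 * ε ^ 2) = #s * (-2 * #s * ε ^ 2) by ring,
      mul_div_mul_left _ _ h_card.ne']
  calc 1 - 2 * exp (-2 * #s * ε ^ 2 / (b - a) ^ 2)
      ≤ 1 - μ.real {ω | #s * ε ≤ |∑ i ∈ s, (X i ω - μ[X i])|} := by
        rw [h_exponent]
        linarith [measureReal_abs_sum_sub_integral_ge_le h_indep hm hab s
          (mul_nonneg h_card.le hε)]
    _ ≤ μ.real {ω | |(∑ i ∈ s, X i ω) / #s - m| ≤ ε} :=
        one_sub_measureReal_le_of_compl_subset h_tail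

end ProbabilityTheory

lemma two_mul_exp_neg_le_inv_of_log_le {ν ε : ℝ} (hν : 0 < ν) (hε : 0 < ε) {K : ℕ}
    (hK : log (2 * ν) / (2 * ε ^ 2) ≤ K) :
    2 * exp (-2 * K * ε ^ 2) ≤ ν⁻¹ := by
  have h_log : log (2 * ν) ≤ 2 * K * ε ^ 2 := by
    rw [div_le_iff₀ (by positivity)] at hK
    linarith
  have h_exp : 2 * ν ≤ exp (2 * K * ε ^ 2) := by
    calc 2 * ν = exp (log (2 * ν)) := (exp_log (by positivity)).symm
      _ ≤ exp (2 * K * ε ^ 2) := exp_le_exp.2 h_log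
  rw [neg_mul, neg_mul, exp_neg, ← div_eq_mul_inv, div_le_iff₀ (exp_pos _), inv_mul_eq_div,
    le_div_iff₀ hν]
  linarith

theorem stmt_1_general
    {Ω : Type*} [MeasurableSpace Ω] (P : Measure Ω) [IsProbabilityMeasure P]
    {T : Type*} [Fintype T] [Nonempty T] [MeasurableSpace T] [MeasurableSingletonClass T]
    (I : ℕ)
    (F : T → ℝ) (hF : ∀ x : T, 0 ≤ F x ∧ F x ≤ 2 ^ I)
    (ε ν : ℝ) (hε : 0 < ε) (hν : 1 ≤ ν)
    (K : ℕ) (hKdef : K = ⌈Real.log (2 * ν) / (2 * ε ^ 2)⌉₊) (hK : 0 < K)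
    (t : Fin K → Ω → T)
    (hmeas : ∀ i, Measurable (t i))
    (hunif : ∀ i, Measure.map (t i) P = (PMF.uniformOfFintype T).toMeasure)
    (hindep : iIndepFun t P)
    (C : ℝ) (hC : C = ((2 : ℝ) ^ I)⁻¹ * ∫ ω, F (t ⟨0, hK⟩ ω) ∂P)
    (Ctilde : Ω → ℝ)
    (hCt : ∀ ω, Ctilde ω = (1 / ((2 : ℝ) ^ I * (K : ℝ))) * ∑ i : Fin K, F (t i ω)) :
    (P {ω | |Ctilde ω - C| ≤ ε}).toReal ≥ 1 - 1 / ν := by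
  set f : T → ℝ := fun x => F x / 2 ^ I
  have hf_mem : ∀ x, f x ∈ Set.Icc 0 1 := fun x =>
    ⟨div_nonneg (hF x).1 (by positivity), div_le_one_of_le₀ (hF x).2 (by positivity)⟩
  have h_mean : ∀ i, P[f ∘ t i] = C := by
    intro i
    have h_ident : IdentDistrib (t i) (t ⟨0, hK⟩) P P :=
      ⟨(hmeas i).aemeasurable, (hmeas _).aemeasurable, (hunif i).trans (hunif _).symm⟩
    rw [(h_ident.comp (measurable_of_countable f)).integral_eq, hC, inv_mul_eq_div]
    exact integral_div _ _
  have h_empirical : ∀ ω, Ctilde ω = (∑ i, (f ∘ t i) ω) / K := by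
    intro ω
    rw [hCt]
    simp only [Function.comp_apply, f, ← sum_div]
    field_simp
  have h_hoeffding := one_sub_two_mul_exp_le_measureReal_abs_sum_div_card_sub_le
    (hindep.comp (fun _ => f) fun _ => measurable_of_countable f)
    (fun i => ((measurable_of_countable f).comp (hmeas i)).aemeasurable)
    (fun i => ae_of_all _ fun ω => hf_mem (t i ω)) ⟨⟨0, hK⟩, mem_univ _⟩ (fun i _ => h_mean i)
    hε.le
  rw [card_univ, Fintype.card_fin, sub_zero, one_pow, div_one] at h_hoeffding
  simp only [← h_empirical] at h_hoeffding
  have h_sample_size := two_mul_exp_neg_le_inv_of_log_le (by linarith) hε (hKdef ▸ Nat.le_ceil _)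
  rw [ge_iff_le, one_div, ← measureReal_def]
  linarith

/-- Sample-complexity theorem for the constant-time clustering-coefficient
approximation algorithm: with `K = ⌈ln(2ν)/(2ε²)⌉` i.i.d. uniform samples from the
nonempty finite set `T`, and `F : T → ℝ` with values in `[0, 2^I]` (`I ∈ {0,1}`),
the empirical estimator `C̃ = (2^I K)⁻¹ ∑ᵢ F(tᵢ)` approximates `C = 2^{-I} 𝔼[F(t₁)]`
within `ε` with probability at least `1 - 1/ν`. -/
theorem stmt_1
    {Ω : Type*} [MeasurableSpace Ω] (P : Measure Ω) [IsProbabilityMeasure P]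
    {T : Type*} [Fintype T] [Nonempty T] [MeasurableSpace T] [MeasurableSingletonClass T]
    (I : ℕ) (hI : I = 0 ∨ I = 1)
    (F : T → ℝ) (hF : ∀ x : T, 0 ≤ F x ∧ F x ≤ 2 ^ I)
    (ε ν : ℝ) (hε : 0 < ε) (hν : 1 ≤ ν)
    (K : ℕ) (hKdef : K = ⌈Real.log (2 * ν) / (2 * ε ^ 2)⌉₊) (hK : 0 < K)
    (t : Fin K → Ω → T)
    (hmeas : ∀ i, Measurable (t i))
    (hunif : ∀ i, Measure.map (t i) P = (PMF.uniformOfFintype T).toMeasure)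
    (hindep : iIndepFun t P)
    (C : ℝ) (hC : C = ((2 : ℝ) ^ I)⁻¹ * ∫ ω, F (t ⟨0, hK⟩ ω) ∂P)
    (Ctilde : Ω → ℝ)
    (hCt : ∀ ω, Ctilde ω = (1 / ((2 : ℝ) ^ I * (K : ℝ))) * ∑ i : Fin K, F (t i ω)) :
    (P {ω | |Ctilde ω - C| ≤ ε}).toReal ≥ 1 - 1 / ν :=
  stmt_1_general P I F hF ε ν hε hν K hKdef hK t hmeas hunif hindep C hC Ctilde hCt
end

section
/- For every real number γ, the quantity δ(γ) = g(γ)·(g(γ) − γ), where g(γ) = φ(γ)/(1 − Φ(γ)) with φ and Φ the standard normal density and cumulative distribution function, satisfies 0 < δ(γ) < 1. In particular g(γ) > γ and g(γ) > 0 for all γ ∈ ℝ. -/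
/-!
Conditionally on `Z > γ`, a standard normal `Z` has mean `g(γ)` and variance `1 - δ(γ)`.
Concretely, with `Q = 1 - Φ(γ)`, integrating `φ' = -t φ` by parts gives
`∫_γ^∞ t φ = φ(γ)` and `∫_γ^∞ t² φ = γ φ(γ) + Q`, hence
`(g(γ) - γ) Q = ∫_γ^∞ (t - γ) φ(t) dt` and `(1 - δ(γ)) Q = ∫_γ^∞ (t - g(γ))² φ(t) dt`.
Both integrands are continuous, nonnegative and not identically zero on `(γ, ∞)`,
so `g(γ) > γ` and `δ(γ) < 1`; then `g(γ) > 0` and `δ(γ) = g(γ) (g(γ) - γ) > 0` follow.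
-/

open MeasureTheory ProbabilityTheory

/-- The standard normal probability density function `φ`. -/
noncomputable def stdNormalPDF (x : ℝ) : ℝ := gaussianPDFReal 0 1 x

/-- The standard normal cumulative distribution function `Φ`. -/
noncomputable def stdNormalCDF (x : ℝ) : ℝ := ((gaussianReal 0 1) (Set.Iic x)).toReal

/-- The hazard (inverse Mills ratio) function `g(γ) = φ(γ) / (1 - Φ(γ))`. -/
noncomputable def invMillsRatio (x : ℝ) : ℝ := stdNormalPDF x / (1 - stdNormalCDF x)

/-- `δ(γ) = g(γ)·(g(γ) - γ)`. -/
noncomputable def millsDelta (x : ℝ) : ℝ := invMillsRatio x * (invMillsRatio x - x)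

open Real Set Filter Topology

theorem setIntegral_pos_of_isOpen {X : Type*} [TopologicalSpace X] [MeasurableSpace X]
    [OpensMeasurableSpace X] {μ : Measure X} [μ.IsOpenPosMeasure] {f : X → ℝ} {s : Set X}
    {x : X} (hs : IsOpen s) (hf : Continuous f) (hfi : IntegrableOn f s μ)
    (hnonneg : ∀ y ∈ s, 0 ≤ f y) (hx : x ∈ s) (hfx : f x ≠ 0) : 0 < ∫ y in s, f y ∂μ :=
  (setIntegral_pos_iff_support_of_nonneg_ae (ae_restrict_of_forall_mem hs.measurableSet hnonneg)
    hfi).2 ((hf.isOpen_support.inter hs).measure_pos μ ⟨x, hfx, hx⟩)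

theorem stdNormalPDF_eq (x : ℝ) : stdNormalPDF x = (√(2 * π))⁻¹ * exp (-x ^ 2 / 2) := by
  simp [stdNormalPDF, gaussianPDFReal]

theorem stdNormalPDF_pos (x : ℝ) : 0 < stdNormalPDF x :=
  gaussianPDFReal_pos 0 1 x one_ne_zero

theorem hasDerivAt_stdNormalPDF (x : ℝ) : HasDerivAt stdNormalPDF (-x * stdNormalPDF x) x := by
  have hexp : HasDerivAt (fun y : ℝ => -y ^ 2 / 2) (-x) x :=
    ((hasDerivAt_pow 2 x).fun_neg.div_const 2).congr_deriv (by ring)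
  have h := hexp.exp.const_mul (√(2 * π))⁻¹
  rw [← funext stdNormalPDF_eq] at h
  exact h.congr_deriv (by rw [stdNormalPDF_eq]; ring)

theorem continuous_stdNormalPDF : Continuous stdNormalPDF :=
  continuous_iff_continuousAt.2 fun x => (hasDerivAt_stdNormalPDF x).continuousAt

theorem integrable_stdNormalPDF : Integrable stdNormalPDF :=
  integrable_gaussianPDFReal 0 1

theorem integrable_pow_mul_stdNormalPDF (n : ℕ) :
    Integrable fun t => t ^ n * stdNormalPDF t := by
  have h := (integrable_rpow_mul_exp_neg_mul_sq (b := 1 / 2) (by norm_num)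
    (s := n) (by linarith [n.cast_nonneg (α := ℝ)])).const_mul (√(2 * π))⁻¹
  convert h using 2 with t
  rw [stdNormalPDF_eq, rpow_natCast]; ring_nf

theorem integrable_mul_stdNormalPDF : Integrable fun t => t * stdNormalPDF t := by
  simpa using integrable_pow_mul_stdNormalPDF 1

theorem one_sub_stdNormalCDF (x : ℝ) :
    1 - stdNormalCDF x = ∫ t in Ioi x, stdNormalPDF t := by
  rw [stdNormalCDF, ← measureReal_def, ← probReal_compl_eq_one_sub measurableSet_Iic, compl_Iic,
    measureReal_def, gaussianReal_apply_eq_integral 0 one_ne_zero, ENNReal.toReal_ofReal]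
  · rfl
  · exact setIntegral_nonneg measurableSet_Ioi fun t _ => (stdNormalPDF_pos t).le

theorem one_sub_stdNormalCDF_pos (x : ℝ) : 0 < 1 - stdNormalCDF x := by
  rw [one_sub_stdNormalCDF]
  exact setIntegral_pos_of_isOpen isOpen_Ioi continuous_stdNormalPDF
    integrable_stdNormalPDF.integrableOn (fun t _ => (stdNormalPDF_pos t).le)
    (lt_add_one x) (stdNormalPDF_pos _).ne'

theorem integral_Ioi_mul_stdNormalPDF (x : ℝ) :
    ∫ t in Ioi x, t * stdNormalPDF t = stdNormalPDF x := by
  have hderiv (t : ℝ) : HasDerivAt (fun t => -stdNormalPDF t) (t * stdNormalPDF t) t :=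
    (hasDerivAt_stdNormalPDF t).neg.congr_deriv (by ring)
  have hlim : Tendsto (fun t => -stdNormalPDF t) atTop (𝓝 0) :=
    tendsto_zero_of_hasDerivAt_of_integrableOn_Ioi (a := x) (fun t _ => hderiv t)
      integrable_mul_stdNormalPDF.integrableOn integrable_stdNormalPDF.neg.integrableOn
  simpa using integral_Ioi_of_hasDerivAt_of_tendsto' (fun t _ => hderiv t)
    integrable_mul_stdNormalPDF.integrableOn hlim

theorem integral_Ioi_sq_mul_stdNormalPDF (x : ℝ) :
    ∫ t in Ioi x, t ^ 2 * stdNormalPDF t = x * stdNormalPDF x + (1 - stdNormalCDF x) := by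
  have hderiv (t : ℝ) : HasDerivAt (fun t => -(t * stdNormalPDF t))
      (t ^ 2 * stdNormalPDF t - stdNormalPDF t) t :=
    ((hasDerivAt_id' t).fun_mul (hasDerivAt_stdNormalPDF t)).fun_neg.congr_deriv (by ring)
  have hint : Integrable fun t => t ^ 2 * stdNormalPDF t - stdNormalPDF t :=
    (integrable_pow_mul_stdNormalPDF 2).sub integrable_stdNormalPDF
  have hlim : Tendsto (fun t => -(t * stdNormalPDF t)) atTop (𝓝 0) :=
    tendsto_zero_of_hasDerivAt_of_integrableOn_Ioi (a := x) (fun t _ => hderiv t)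
      hint.integrableOn integrable_mul_stdNormalPDF.neg.integrableOn
  have h := integral_Ioi_of_hasDerivAt_of_tendsto' (a := x) (fun t _ => hderiv t)
    hint.integrableOn hlim
  rw [integral_sub (integrable_pow_mul_stdNormalPDF 2).integrableOn
    integrable_stdNormalPDF.integrableOn, ← one_sub_stdNormalCDF] at h
  linarith

theorem integrable_sub_mul_stdNormalPDF (c : ℝ) :
    Integrable fun t => (t - c) * stdNormalPDF t := by
  refine (integrable_mul_stdNormalPDF.sub (integrable_stdNormalPDF.const_mul c)).congr
    (.of_forall fun t => ?_)
  simp only [Pi.sub_apply]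
  ring

theorem integrable_sub_sq_mul_stdNormalPDF (c : ℝ) :
    Integrable fun t => (t - c) ^ 2 * stdNormalPDF t := by
  refine (((integrable_pow_mul_stdNormalPDF 2).sub
    (integrable_mul_stdNormalPDF.const_mul (2 * c))).add
    (integrable_stdNormalPDF.const_mul (c ^ 2))).congr (.of_forall fun t => ?_)
  simp only [Pi.add_apply, Pi.sub_apply]
  ring

theorem invMillsRatio_sub_mul (x : ℝ) :
    (invMillsRatio x - x) * (1 - stdNormalCDF x) = ∫ t in Ioi x, (t - x) * stdNormalPDF t := by
  simp_rw [sub_mul]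
  rw [integral_sub integrable_mul_stdNormalPDF.integrableOn
    (integrable_stdNormalPDF.const_mul x).integrableOn, integral_const_mul,
    integral_Ioi_mul_stdNormalPDF, ← one_sub_stdNormalCDF, invMillsRatio,
    div_mul_cancel₀ _ (one_sub_stdNormalCDF_pos x).ne']

theorem one_sub_millsDelta_mul (x : ℝ) :
    (1 - millsDelta x) * (1 - stdNormalCDF x) =
      ∫ t in Ioi x, (t - invMillsRatio x) ^ 2 * stdNormalPDF t := by
  set g := invMillsRatio x
  have hφ : stdNormalPDF x = g * (1 - stdNormalCDF x) :=
    (div_mul_cancel₀ _ (one_sub_stdNormalCDF_pos x).ne').symm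
  have hexpand (t : ℝ) : (t - g) ^ 2 * stdNormalPDF t =
      t ^ 2 * stdNormalPDF t - 2 * g * (t * stdNormalPDF t) + g ^ 2 * stdNormalPDF t := by ring
  have hint : Integrable fun t => t ^ 2 * stdNormalPDF t - 2 * g * (t * stdNormalPDF t) :=
    (integrable_pow_mul_stdNormalPDF 2).sub (integrable_mul_stdNormalPDF.const_mul _)
  simp_rw [hexpand]
  rw [integral_add hint.integrableOn (integrable_stdNormalPDF.const_mul _).integrableOn,
    integral_sub (integrable_pow_mul_stdNormalPDF 2).integrableOn
      (integrable_mul_stdNormalPDF.const_mul _).integrableOn,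
    integral_const_mul, integral_const_mul, integral_Ioi_sq_mul_stdNormalPDF,
    integral_Ioi_mul_stdNormalPDF, ← one_sub_stdNormalCDF, millsDelta, hφ]
  ring

theorem lt_invMillsRatio (x : ℝ) : x < invMillsRatio x := by
  have hgap : 0 < (invMillsRatio x - x) * (1 - stdNormalCDF x) := by
    rw [invMillsRatio_sub_mul]
    refine setIntegral_pos_of_isOpen isOpen_Ioi
      ((continuous_id.sub continuous_const).mul continuous_stdNormalPDF)
      (integrable_sub_mul_stdNormalPDF x).integrableOn
      (fun t ht => mul_nonneg (sub_nonneg.2 (le_of_lt ht)) (stdNormalPDF_pos t).le)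
      (lt_add_one x) ?_
    simp [(stdNormalPDF_pos _).ne']
  exact sub_pos.1 (pos_of_mul_pos_left hgap (one_sub_stdNormalCDF_pos x).le)

theorem invMillsRatio_pos (x : ℝ) : 0 < invMillsRatio x :=
  div_pos (stdNormalPDF_pos x) (one_sub_stdNormalCDF_pos x)

theorem millsDelta_pos (x : ℝ) : 0 < millsDelta x :=
  mul_pos (invMillsRatio_pos x) (sub_pos.2 (lt_invMillsRatio x))

theorem millsDelta_lt_one (x : ℝ) : millsDelta x < 1 := by
  have hvar : 0 < (1 - millsDelta x) * (1 - stdNormalCDF x) := by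
    rw [one_sub_millsDelta_mul]
    refine setIntegral_pos_of_isOpen isOpen_Ioi
      (((continuous_id.sub continuous_const).pow 2).mul continuous_stdNormalPDF)
      (integrable_sub_sq_mul_stdNormalPDF _).integrableOn
      (fun t _ => mul_nonneg (sq_nonneg _) (stdNormalPDF_pos t).le)
      ((lt_invMillsRatio x).trans (lt_add_one _)) ?_
    simp [(stdNormalPDF_pos _).ne']
  exact sub_pos.1 (pos_of_mul_pos_left hvar (one_sub_stdNormalCDF_pos x).le)

/-- For every real `γ`, `0 < δ(γ) < 1`; in particular `g(γ) > γ` and `g(γ) > 0`. -/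
theorem stmt_5 (γ : ℝ) :
    0 < millsDelta γ ∧ millsDelta γ < 1 ∧ γ < invMillsRatio γ ∧ 0 < invMillsRatio γ :=
  ⟨millsDelta_pos γ, millsDelta_lt_one γ, lt_invMillsRatio γ, invMillsRatio_pos γ⟩
end

section
/- Let m₀ > 0, t > 0, and 0 ≤ p < 1 be real numbers. Let T be a random variable uniformly distributed on the interval [0, t], and define the random variable D = ((t + m₀)/(T + m₀))^{1−p}. Then the law of D is absolutely continuous with respect to Lebesgue measure, with density x ↦ ((t + m₀)/(t·(1 − p)))·x^{−(2−p)/(1−p)} on the interval [1, ((t + m₀)/m₀)^{1−p}] and 0 outside this interval. Equivalently, for 1 < D₀ < ((t + m₀)/m₀)^{1−p}, the derivative of D₀ ↦ P(D ≤ D₀) equals ((t + m₀)/(t·(1 − p)))·D₀^{−(2−p)/(1−p)}. -/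
/-!
For `τ ∈ [0, t]` we have `D(τ) ≤ y` iff `τ ≥ (t + m₀) y^(-1/(1-p)) - m₀`, so on
`[1, ((t + m₀)/m₀)^(1-p)]` the distribution function of `D` is
`F(y) = ((t + m₀)/t) (1 - y^(-1/(1-p)))`. Its derivative is the claimed density, so by the
fundamental theorem of calculus the density also integrates to `F` over `[1, y]`. Both laws are
concentrated on `[1, ((t + m₀)/m₀)^(1-p)]`, hence they agree on every half-line `(-∞, y]` and
coincide.
-/

open MeasureTheory ProbabilityTheory Set

namespace Real

lemma div_rpow_le_iff {a b y α : ℝ} (ha : 0 < a) (hb : 0 ≤ b) (hy : 0 < y) (hα : 0 < α) :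
    (b / a) ^ α ≤ y ↔ b * y ^ (-α⁻¹) ≤ a := by
  rw [← le_rpow_inv_iff_of_pos (div_nonneg hb ha.le) hy.le hα, div_le_iff₀ ha, rpow_neg hy.le,
    ← div_eq_mul_inv, div_le_iff₀ (by positivity), mul_comm]

lemma le_div_rpow_iff {a b y α : ℝ} (ha : 0 < a) (hb : 0 ≤ b) (hy : 0 < y) (hα : 0 < α) :
    y ≤ (b / a) ^ α ↔ a ≤ b * y ^ (-α⁻¹) := by
  rw [← rpow_inv_le_iff_of_pos hy.le (div_nonneg hb ha.le) hα, le_div_iff₀ ha, rpow_neg hy.le,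
    ← div_eq_mul_inv, le_div_iff₀ (by positivity), mul_comm]

end Real

namespace MeasureTheory.Measure

lemma ext_of_Iic_of_compl_Icc_eq_zero {μ ν : Measure ℝ} [IsFiniteMeasure μ] {a b : ℝ}
    (hab : a ≤ b) (hμ : μ (Icc a b)ᶜ = 0) (hν : ν (Icc a b)ᶜ = 0)
    (h : ∀ y ∈ Icc a b, μ (Iic y) = ν (Iic y)) : μ = ν := by
  have below {ρ : Measure ℝ} (hρ : ρ (Icc a b)ᶜ = 0) {y : ℝ} (hy : y < a) :
      ρ (Iic y) = 0 :=
    measure_mono_null (fun x (hx : x ≤ y) (hx' : x ∈ Icc a b) => hy.not_ge (hx'.1.trans hx)) hρ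
  have above {ρ : Measure ℝ} (hρ : ρ (Icc a b)ᶜ = 0) {y : ℝ} (hy : b ≤ y) :
      ρ (Iic y) = ρ (Iic b) := by
    rw [← measure_inter_conull (s := Iic y) hρ, ← measure_inter_conull (s := Iic b) hρ,
      inter_eq_right.2 (Icc_subset_Iic_self.trans (Iic_subset_Iic.2 hy)),
      inter_eq_right.2 Icc_subset_Iic_self]
  refine ext_of_Iic μ ν fun y => ?_
  rcases lt_or_ge y a with hya | hay
  · rw [below hμ hya, below hν hya]
  rcases le_or_gt y b with hyb | hby
  · exact h y ⟨hay, hyb⟩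
  · rw [above hμ hby.le, above hν hby.le]
    exact h b ⟨hab, le_rfl⟩

end MeasureTheory.Measure

lemma MeasureTheory.withDensity_ofReal_indicator_apply {α : Type*} [MeasurableSpace α]
    {μ : Measure α} {s A : Set α} (hs : MeasurableSet s) (hA : MeasurableSet A)
    (f : α → ℝ) :
    μ.withDensity (fun x => ENNReal.ofReal (s.indicator f x)) A
      = ∫⁻ x in s ∩ A, ENNReal.ofReal (f x) ∂μ := by
  rw [withDensity_apply _ hA, ← Function.comp_def ENNReal.ofReal,
    ← indicator_comp_of_zero ENNReal.ofReal_zero, lintegral_indicator hs,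
    Measure.restrict_restrict hs, Function.comp_def]

noncomputable def attrDegree (m0 t p τ : ℝ) : ℝ := ((t + m0) / (τ + m0)) ^ (1 - p)

/-- The distribution function of `attrDegree m0 t p` only on `[1, ((t + m0)/m0)^(1-p)]`. -/
noncomputable def attrDegreeCDF (m0 t p y : ℝ) : ℝ := (t + m0) / t * (1 - y ^ (-(1 - p)⁻¹))

noncomputable def attrDegreeDensity (m0 t p y : ℝ) : ℝ :=
  (t + m0) / (t * (1 - p)) * y ^ (-((2 - p) / (1 - p)))

section AttrDegree

variable {m0 t p : ℝ}

lemma measurable_attrDegree : Measurable (attrDegree m0 t p) := by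
  unfold attrDegree; fun_prop

lemma attrDegree_mem_Icc (hm0 : 0 < m0) (hp1 : p < 1) {τ : ℝ} (hτ : τ ∈ Icc 0 t) :
    attrDegree m0 t p τ ∈ Icc 1 (((t + m0) / m0) ^ (1 - p)) := by
  obtain ⟨hτ0, hτt⟩ := hτ
  have hτm : 0 < τ + m0 := by linarith
  exact ⟨Real.one_le_rpow ((one_le_div hτm).2 (by linarith)) (by linarith),
    Real.rpow_le_rpow (div_pos (by linarith) hτm).le
      (div_le_div_of_nonneg_left (by linarith) hm0 (by linarith)) (by linarith)⟩

lemma inter_preimage_attrDegree_Iic (hm0 : 0 < m0) (ht : 0 ≤ t) (hp1 : p < 1) {y : ℝ}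
    (hy : y ∈ Icc 1 (((t + m0) / m0) ^ (1 - p))) :
    Icc 0 t ∩ attrDegree m0 t p ⁻¹' Iic y = Icc ((t + m0) * y ^ (-(1 - p)⁻¹) - m0) t := by
  have hα : 0 < 1 - p := by linarith
  have hy0 : 0 < y := by linarith [hy.1]
  have hm0_le := (Real.le_div_rpow_iff hm0 (by linarith) hy0 hα).1 hy.2
  ext τ
  simp only [mem_inter_iff, mem_Icc, mem_preimage, mem_Iic, attrDegree]
  constructor
  · rintro ⟨⟨hτ0, hτt⟩, hD⟩
    have hle := (Real.div_rpow_le_iff (by linarith) (by linarith) hy0 hα).1 hD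
    exact ⟨by linarith, hτt⟩
  · rintro ⟨hτ, hτt⟩
    exact ⟨⟨by linarith, hτt⟩,
      (Real.div_rpow_le_iff (by linarith) (by linarith) hy0 hα).2 (by linarith)⟩

lemma map_attrDegree_Iic (hm0 : 0 < m0) (ht : 0 < t) (hp1 : p < 1) {y : ℝ}
    (hy : y ∈ Icc 1 (((t + m0) / m0) ^ (1 - p))) :
    (volume[|Icc 0 t]).map (attrDegree m0 t p) (Iic y)
      = ENNReal.ofReal (attrDegreeCDF m0 t p y) := by
  rw [Measure.map_apply measurable_attrDegree measurableSet_Iic, cond_apply measurableSet_Icc,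
    inter_preimage_attrDegree_Iic hm0 ht.le hp1 hy, Real.volume_Icc, Real.volume_Icc,
    ← ENNReal.ofReal_inv_of_pos (by linarith), ← ENNReal.ofReal_mul (by positivity),
    sub_zero, attrDegreeCDF]
  congr 1
  field_simp
  ring

lemma map_attrDegree_compl_Icc (hm0 : 0 < m0) (hp1 : p < 1) :
    (volume[|Icc 0 t]).map (attrDegree m0 t p) (Icc 1 (((t + m0) / m0) ^ (1 - p)))ᶜ = 0 := by
  have hempty : Icc 0 t ∩ attrDegree m0 t p ⁻¹' (Icc 1 (((t + m0) / m0) ^ (1 - p)))ᶜ = ∅ :=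
    eq_empty_of_forall_notMem fun τ hτ => hτ.2 (attrDegree_mem_Icc hm0 hp1 hτ.1)
  rw [Measure.map_apply measurable_attrDegree measurableSet_Icc.compl,
    cond_apply measurableSet_Icc, hempty, measure_empty, mul_zero]

lemma hasDerivAt_attrDegreeCDF (hp1 : p < 1) {y : ℝ} (hy : 0 < y) :
    HasDerivAt (attrDegreeCDF m0 t p) (attrDegreeDensity m0 t p y) y := by
  have hα : 1 - p ≠ 0 := by linarith
  have hexp : -(1 - p)⁻¹ - 1 = -((2 - p) / (1 - p)) := by field_simp; ring
  refine (((Real.hasDerivAt_rpow_const (p := -(1 - p)⁻¹) (Or.inl hy.ne')).const_sub 1).const_mul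
    ((t + m0) / t)).congr_deriv ?_
  rw [attrDegreeDensity, ← hexp]
  field_simp

lemma attrDegreeCDF_nonneg (ht : 0 ≤ t) (hm0 : 0 ≤ m0) (hp1 : p < 1) {y : ℝ} (hy : 1 ≤ y) :
    0 ≤ attrDegreeCDF m0 t p y :=
  mul_nonneg (by positivity) (sub_nonneg.2 (Real.rpow_le_one_of_one_le_of_nonpos hy
    (neg_nonpos.2 (inv_nonneg.2 (by linarith)))))

lemma continuousOn_attrDegreeDensity : ContinuousOn (attrDegreeDensity m0 t p) (Ioi 0) :=
  continuousOn_const.mul (continuousOn_id.rpow_const fun _ hx => Or.inl hx.ne')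

lemma withDensity_attrDegreeDensity_Iic (hm0 : 0 ≤ m0) (ht : 0 ≤ t) (hp1 : p < 1) {M y : ℝ}
    (hy : y ∈ Icc 1 M) :
    volume.withDensity
        (fun x => ENNReal.ofReal ((Icc 1 M).indicator (attrDegreeDensity m0 t p) x)) (Iic y)
      = ENNReal.ofReal (attrDegreeCDF m0 t p y) := by
  have hcont : ContinuousOn (attrDegreeDensity m0 t p) (Icc 1 y) :=
    continuousOn_attrDegreeDensity.mono fun x hx => lt_of_lt_of_le one_pos hx.1
  have hnonneg : ∀ x ∈ Icc 1 y, 0 ≤ attrDegreeDensity m0 t p x := fun x hx =>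
    mul_nonneg (div_nonneg (by linarith) (mul_nonneg ht (by linarith)))
      (Real.rpow_nonneg (by linarith [hx.1]) _)
  have hset : Icc 1 M ∩ Iic y = Icc 1 y := by
    ext x
    simp only [mem_inter_iff, mem_Icc, mem_Iic]
    exact ⟨fun h => ⟨h.1.1, h.2⟩, fun h => ⟨⟨h.1, h.2.trans hy.2⟩, h.2⟩⟩
  rw [withDensity_ofReal_indicator_apply measurableSet_Icc measurableSet_Iic, hset,
    ← ofReal_integral_eq_lintegral_ofReal hcont.integrableOn_Icc
      ((ae_restrict_iff' measurableSet_Icc).2 (ae_of_all _ hnonneg)),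
    integral_Icc_eq_integral_Ioc, ← intervalIntegral.integral_of_le hy.1,
    intervalIntegral.integral_eq_sub_of_hasDerivAt
      (fun x hx => hasDerivAt_attrDegreeCDF hp1
        (lt_of_lt_of_le one_pos (uIcc_of_le hy.1 ▸ hx).1))
      (hcont.intervalIntegrable_of_Icc hy.1)]
  simp [attrDegreeCDF]

lemma withDensity_attrDegreeDensity_compl_Icc (M : ℝ) :
    volume.withDensity
        (fun x => ENNReal.ofReal ((Icc 1 M).indicator (attrDegreeDensity m0 t p) x)) (Icc 1 M)ᶜ
      = 0 := by
  rw [withDensity_ofReal_indicator_apply measurableSet_Icc measurableSet_Icc.compl,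
    inter_compl_self, Measure.restrict_empty, lintegral_zero_measure]

theorem map_attrDegree_eq_withDensity (hm0 : 0 < m0) (ht : 0 < t) (hp1 : p < 1) :
    (volume[|Icc 0 t]).map (attrDegree m0 t p)
      = volume.withDensity (fun x => ENNReal.ofReal
          ((Icc 1 (((t + m0) / m0) ^ (1 - p))).indicator (attrDegreeDensity m0 t p) x)) := by
  have hM : 1 ≤ ((t + m0) / m0) ^ (1 - p) :=
    Real.one_le_rpow ((one_le_div hm0).2 (by linarith)) (by linarith)
  refine Measure.ext_of_Iic_of_compl_Icc_eq_zero hM (map_attrDegree_compl_Icc hm0 hp1)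
    (withDensity_attrDegreeDensity_compl_Icc _) fun y hy => ?_
  rw [map_attrDegree_Iic hm0 ht hp1 hy, withDensity_attrDegreeDensity_Iic hm0.le ht.le hp1 hy]

theorem hasDerivAt_map_attrDegree_Iic (hm0 : 0 < m0) (ht : 0 < t) (hp1 : p < 1) {y : ℝ}
    (hy : y ∈ Ioo 1 (((t + m0) / m0) ^ (1 - p))) :
    HasDerivAt (fun z => ((volume[|Icc 0 t]).map (attrDegree m0 t p) (Iic z)).toReal)
      (attrDegreeDensity m0 t p y) y := by
  refine (hasDerivAt_attrDegreeCDF hp1 (by linarith [hy.1])).congr_of_eventuallyEq ?_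
  filter_upwards [Ioo_mem_nhds hy.1 hy.2] with z hz
  rw [map_attrDegree_Iic hm0 ht hp1 (Ioo_subset_Icc_self hz),
    ENNReal.toReal_ofReal (attrDegreeCDF_nonneg ht.le hm0.le hp1 hz.1.le)]

end AttrDegree

theorem stmt_9_general (m0 t p : ℝ) (hm0 : 0 < m0) (ht : 0 < t) (hp1 : p < 1) :
    Measure.map (fun τ => ((t + m0) / (τ + m0)) ^ (1 - p))
        ((volume : Measure ℝ)[|Set.Icc 0 t])
      = volume.withDensity (fun x => ENNReal.ofReal
          (Set.indicator (Set.Icc 1 (((t + m0) / m0) ^ (1 - p)))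
            (fun y => (t + m0) / (t * (1 - p)) * y ^ (-((2 - p) / (1 - p)))) x))
    ∧ ∀ D0 : ℝ, 1 < D0 → D0 < ((t + m0) / m0) ^ (1 - p) →
        HasDerivAt (fun y =>
            ((Measure.map (fun τ => ((t + m0) / (τ + m0)) ^ (1 - p))
              ((volume : Measure ℝ)[|Set.Icc 0 t])) (Set.Iic y)).toReal)
          ((t + m0) / (t * (1 - p)) * D0 ^ (-((2 - p) / (1 - p)))) D0 :=
  ⟨map_attrDegree_eq_withDensity hm0 ht hp1,
    fun _ h1 h2 => hasDerivAt_map_attrDegree_Iic hm0 ht hp1 ⟨h1, h2⟩⟩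

/-- Power-law density of the mean-field degree of an attribute node: if `T` is
uniform on `[0, t]` and `D = ((t + m₀)/(T + m₀))^(1-p)`, then the law of `D` is
absolutely continuous with density `x ↦ ((t + m₀)/(t·(1-p)))·x^(-(2-p)/(1-p))` on
`[1, ((t + m₀)/m₀)^(1-p)]` and `0` outside; equivalently, for
`1 < D₀ < ((t + m₀)/m₀)^(1-p)` the derivative of `D₀ ↦ P(D ≤ D₀)` equals
`((t + m₀)/(t·(1-p)))·D₀^(-(2-p)/(1-p))`. -/
theorem stmt_9 (m0 t p : ℝ) (hm0 : 0 < m0) (ht : 0 < t) (hp0 : 0 ≤ p) (hp1 : p < 1) :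
    Measure.map (fun τ => ((t + m0) / (τ + m0)) ^ (1 - p))
        ((volume : Measure ℝ)[|Set.Icc 0 t])
      = volume.withDensity (fun x => ENNReal.ofReal
          (Set.indicator (Set.Icc 1 (((t + m0) / m0) ^ (1 - p)))
            (fun y => (t + m0) / (t * (1 - p)) * y ^ (-((2 - p) / (1 - p)))) x))
    ∧ ∀ D0 : ℝ, 1 < D0 → D0 < ((t + m0) / m0) ^ (1 - p) →
        HasDerivAt (fun y =>
            ((Measure.map (fun τ => ((t + m0) / (τ + m0)) ^ (1 - p))
              ((volume : Measure ℝ)[|Set.Icc 0 t])) (Set.Iic y)).toReal)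
          ((t + m0) / (t * (1 - p)) * D0 ^ (-((2 - p) / (1 - p)))) D0 :=
  stmt_9_general m0 t p hm0 ht hp1
end
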